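/- arXiv:1704.08645 — 2 statements merged into one kernel-verified Lean document; each statement's English description precedes it below -/
import Mathlib

section
/- Let x ≥ 2, λ = λ(x) = (x+√(x²+4))/2, λ̄ = λ̄(x) = (x−√(x²+4))/2. Suppose positive reals c_0, c_1 satisfy c_1 ≥ x·c_0 and c_1 > c_0, and set A = (c_1 − λ̄c_0)/(λ−λ̄), B = (λc_0 − c_1)/(λ−λ̄). Then for every ℓ ≥ 1, |B·λ̄^ℓ / (A·λ^ℓ)| ≤ 2|λ̄(2)|, where λ̄(2) = 1 − √2. -/
/-!
Since `λ + λ̄ = x ≤ c₁ / c₀` and `λ̄ ≤ λ`, the numerator `λc₀ - c₁` of `B` is dominated in absolute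
value by the numerator `c₁ - λ̄c₀` of `A`, so `|B| ≤ |A|`. As `λ ≥ 1` and `|λ̄| = (√(x² + 4) - x) / 2`
decreases in `x`, the ratio is at most `|λ̄|^ℓ ≤ |λ̄(x)| ≤ |λ̄(2)| = √2 - 1`.
-/

lemma abs_mul_sub_le_sub_mul {a b c d : ℝ} (hab : a ≤ b) (hc : 0 ≤ c) (h : (a + b) * c ≤ 2 * d) :
    |b * c - d| ≤ d - a * c := by
  have hac : a * c ≤ b * c := mul_le_mul_of_nonneg_right hab hc
  rw [abs_le]
  constructor <;> linarith

lemma abs_mul_pow_div_mul_pow_le {a b μ ν r : ℝ} (hba : |b| ≤ |a|) (hν : 1 ≤ ν) (hμ : |μ| ≤ r)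
    (hr : r ≤ 1) {n : ℕ} (hn : n ≠ 0) : |b * μ ^ n / (a * ν ^ n)| ≤ r := by
  have hba' : |b / a| ≤ 1 := by rw [abs_div]; exact div_le_one_of_le₀ hba (abs_nonneg a)
  have hpow : |μ ^ n / ν ^ n| ≤ r :=
    calc |μ ^ n / ν ^ n| = |μ| ^ n / ν ^ n := by
          rw [abs_div, abs_pow, abs_of_pos (by positivity : (0 : ℝ) < ν ^ n)]
      _ ≤ |μ| ^ n := div_le_self (by positivity) (one_le_pow₀ hν)
      _ ≤ |μ| := pow_le_of_le_one (abs_nonneg μ) (hμ.trans hr) hn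
      _ ≤ r := hμ
  rw [mul_div_mul_comm, abs_mul]
  calc |b / a| * |μ ^ n / ν ^ n| ≤ 1 * r :=
        mul_le_mul hba' hpow (abs_nonneg _) zero_le_one
    _ = r := one_mul r

lemma abs_sub_sqrt_sq_add_four_div_two_le {x : ℝ} (hx : 2 ≤ x) :
    |(x - Real.sqrt (x ^ 2 + 4)) / 2| ≤ Real.sqrt 2 - 1 := by
  have hq : Real.sqrt 2 ^ 2 = 2 := Real.sq_sqrt zero_le_two
  have hq1 : 1 < Real.sqrt 2 := Real.one_lt_sqrt_two
  have hxs : x ≤ Real.sqrt (x ^ 2 + 4) := Real.le_sqrt_of_sq_le (by linarith)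
  -- `(x + 2√2 - 2)² - (x² + 4) = 4 (x - 2) (√2 - 1)`
  have hsx : Real.sqrt (x ^ 2 + 4) ≤ x + 2 * Real.sqrt 2 - 2 := by
    rw [Real.sqrt_le_iff]
    constructor
    · linarith
    · nlinarith [mul_nonneg (sub_nonneg.2 hx) (sub_nonneg.2 hq1.le)]
  rw [abs_of_nonpos (by linarith)]
  linarith

theorem stmt_5_general (x : ℝ) (hx : 2 ≤ x) (lam lamb A B c0 c1 : ℝ)
    (hlam : lam = (x + Real.sqrt (x ^ 2 + 4)) / 2)
    (hlamb : lamb = (x - Real.sqrt (x ^ 2 + 4)) / 2)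
    (hc0 : 0 < c0) (h1 : x * c0 ≤ c1)
    (hA : A = (c1 - lamb * c0) / (lam - lamb))
    (hB : B = (lam * c0 - c1) / (lam - lamb)) :
    ∀ ℓ : ℕ, 1 ≤ ℓ → |B * lamb ^ ℓ / (A * lam ^ ℓ)| ≤ 2 * |1 - Real.sqrt 2| := by
  intro ℓ hℓ
  have hs : 0 ≤ Real.sqrt (x ^ 2 + 4) := Real.sqrt_nonneg _
  have hsum : lam + lamb = x := by rw [hlam, hlamb]; ring
  have hBA : |B| ≤ |A| := by
    have hnum : |lam * c0 - c1| ≤ c1 - lamb * c0 :=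
      abs_mul_sub_le_sub_mul (by rw [hlam, hlamb]; linarith) hc0.le
        (by rw [add_comm, hsum]; linarith [mul_nonneg (by linarith : (0 : ℝ) ≤ x) hc0.le])
    rw [hA, hB, abs_div, abs_div]
    exact div_le_div_of_nonneg_right (hnum.trans (le_abs_self _)) (abs_nonneg _)
  have hlamb_le : |lamb| ≤ Real.sqrt 2 - 1 := hlamb ▸ abs_sub_sqrt_sq_add_four_div_two_le hx
  have hq1 := Real.one_lt_sqrt_two
  have hq2 := Real.sqrt_two_lt_three_halves
  calc |B * lamb ^ ℓ / (A * lam ^ ℓ)| ≤ Real.sqrt 2 - 1 :=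
        abs_mul_pow_div_mul_pow_le hBA (by rw [hlam]; linarith) hlamb_le (by linarith) (by omega)
    _ ≤ 2 * |1 - Real.sqrt 2| := by
        rw [abs_sub_comm, abs_of_pos (by linarith)]
        linarith

/-- the subdominant term in the solution of the recursion is uniformly negligible:
`|B λ̄^ℓ / (A λ^ℓ)| ≤ 2|λ̄(2)|` for all `ℓ ≥ 1`, where `λ̄(2) = 1 - √2`. -/
theorem stmt_5 (x : ℝ) (hx : 2 ≤ x) (lam lamb A B c0 c1 : ℝ)
    (hlam : lam = (x + Real.sqrt (x ^ 2 + 4)) / 2)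
    (hlamb : lamb = (x - Real.sqrt (x ^ 2 + 4)) / 2)
    (hc0 : 0 < c0) (hc1 : 0 < c1) (h1 : x * c0 ≤ c1) (h2 : c0 < c1)
    (hA : A = (c1 - lamb * c0) / (lam - lamb))
    (hB : B = (lam * c0 - c1) / (lam - lamb)) :
    ∀ ℓ : ℕ, 1 ≤ ℓ → |B * lamb ^ ℓ / (A * lam ^ ℓ)| ≤ 2 * |1 - Real.sqrt 2| :=
  stmt_5_general x hx lam lamb A B c0 c1 hlam hlamb hc0 h1 hA hB
end

section
/- Let φ : [0,∞) → Δ² be a function, γ : ℝ → Δ² continuous, (t_j) a sequence with (γ(t_j)) dense in γ(ℝ), (ε_j) decreasing to 0, and (S_k) an increasing unbounded sequence in [0,∞). Suppose that for all k ≥ 2 and all t ∈ [S_{k-1}, S_k), |φ(t) − γ(t_k)|₁ ≤ 33·ε_k (ℓ¹-norm on ℝ³). Then the set of accumulation points of φ(t) as t → ∞ equals the closure of γ(ℝ) in Δ². -/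
/-!
On the block `[S (k-1), S k)` the curve `φ` stays within `33 ε k` of `γ (t k)`, and `ε k → 0`;
so the accumulation points of `φ` at infinity are exactly the cluster points of the sequence
`γ (t k)`. That sequence is dense in `γ(ℝ)`, which is connected: either it is a single point, or
it has no isolated points, and then every point of its closure is an accumulation point of the
sequence's range, hence a cluster point of the sequence (a finite initial segment cannot
contribute accumulation points).
-/

open Filter Topology Set

theorem dist_le_sum_abs_sub {ι : Type*} [Fintype ι] (x y : ι → ℝ) :
    dist x y ≤ ∑ i, |x i - y i| :=
  (dist_pi_le_iff (Finset.sum_nonneg fun _ _ => abs_nonneg _)).2 fun i =>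
    (Real.dist_eq _ _).trans_le <|
      Finset.single_le_sum (fun i _ => abs_nonneg (x i - y i)) (Finset.mem_univ i)

section ClusterPoints

variable {X : Type*} [TopologicalSpace X] [T1Space X]

theorem mapClusterPt_of_accPt_range {u : ℕ → X} {x : X} (h : AccPt x (𝓟 (range u))) :
    MapClusterPt x atTop u := by
  rw [mapClusterPt_atTop_iff_forall_mem_closure]
  intro i
  have hsplit : range u = u '' Iio i ∪ u '' Ici i := by
    rw [← image_union, Iio_union_Ici, image_univ]
  rw [hsplit, ← mem_derivedSet, derivedSet_union] at h
  rcases h with h | h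
  · exact absurd ((finite_Iio i).image u) (Set.Infinite.of_accPt h)
  · exact derivedSet_subset_closure _ h

theorem mapClusterPt_comp_iff_mem_closure_range {Y : Type*} [TopologicalSpace Y]
    [PreconnectedSpace Y] {γ : Y → X} (hγ : Continuous γ) {t : ℕ → Y}
    (hdense : range γ ⊆ closure (range (γ ∘ t))) {x : X} :
    MapClusterPt x atTop (γ ∘ t) ↔ x ∈ closure (range γ) := by
  refine ⟨fun h => isClosed_closure.mem_of_mapClusterPt h
    (Eventually.of_forall fun n => subset_closure (mem_range_self _)), fun hx => ?_⟩
  rcases (range γ).subsingleton_or_nontrivial with hsub | hnontriv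
  · obtain ⟨y, rfl⟩ : x ∈ range γ := hsub.isClosed.closure_eq ▸ hx
    have hconst : γ ∘ t = fun _ => γ y :=
      funext fun n => hsub (mem_range_self _) (mem_range_self _)
    rw [hconst]
    exact tendsto_const_nhds.mapClusterPt
  · have hperfect :=
      ((isPreconnected_range hγ).preperfect_of_nontrivial hnontriv).perfect_closure
    rw [perfect_iff_eq_derivedSet] at hperfect
    rw [hperfect, derivedSet_closure] at hx
    refine mapClusterPt_of_accPt_range ?_
    rw [← mem_derivedSet, ← derivedSet_closure]
    exact derivedSet_mono _ _ hdense hx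

end ClusterPoints

/-- The index `k` of the block `[S (k - 1), S k)` containing `u` (it is `0` when `u < S 0`). -/
noncomputable def blockIndex (S : ℕ → ℝ) (u : ℝ) : ℕ :=
  sInf {k | u < S k}

section Blocks

variable {S : ℕ → ℝ}

theorem lt_blockIndex (hS : Tendsto S atTop atTop) (u : ℝ) : u < S (blockIndex S u) :=
  Nat.sInf_mem (hS.eventually_gt_atTop u).exists

theorem le_blockIndex_pred {u : ℝ} (hk : 0 < blockIndex S u) : S (blockIndex S u - 1) ≤ u :=
  not_lt.1 (Nat.notMem_of_lt_sInf (Nat.sub_lt hk one_pos))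

theorem tendsto_blockIndex (hmono : Monotone S) (hS : Tendsto S atTop atTop) :
    Tendsto (blockIndex S) atTop atTop := by
  refine tendsto_atTop_atTop.2 fun N => ⟨S N, fun u hu => ?_⟩
  by_contra! hlt
  exact (lt_blockIndex hS u).not_ge ((hmono hlt.le).trans hu)

theorem eventually_mem_Ico_blockIndex (hmono : Monotone S) (hS : Tendsto S atTop atTop) :
    ∀ᶠ u in atTop, u ∈ Ico (S (blockIndex S u - 1)) (S (blockIndex S u)) := by
  filter_upwards [(tendsto_blockIndex hmono hS).eventually_gt_atTop 0] with u hu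
  exact ⟨le_blockIndex_pred hu, lt_blockIndex hS u⟩

variable {X : Type*} [PseudoMetricSpace X] {f : ℝ → X} {a : ℕ → X} {δ : ℕ → ℝ}

theorem tendsto_comp_iff_of_mem_Ico (hδ : Tendsto δ atTop (𝓝 0))
    (hfa : ∀ k, 2 ≤ k → ∀ u, S (k - 1) ≤ u → u < S k → dist (f u) (a k) ≤ δ k)
    {ι : Type*} {l : Filter ι} {k : ι → ℕ} (hk : Tendsto k l atTop) {u : ι → ℝ}
    (hu : ∀ᶠ i in l, u i ∈ Ico (S (k i - 1)) (S (k i))) {x : X} :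
    Tendsto (f ∘ u) l (𝓝 x) ↔ Tendsto (a ∘ k) l (𝓝 x) := by
  refine tendsto_iff_of_dist <| squeeze_zero' (Eventually.of_forall fun _ => dist_nonneg) ?_
    (hδ.comp hk)
  filter_upwards [hu, hk.eventually_ge_atTop 2] with i hi hk2
  exact hfa _ hk2 _ hi.1 hi.2

theorem exists_tendsto_comp_iff_mapClusterPt (hδ : Tendsto δ atTop (𝓝 0))
    (hfa : ∀ k, 2 ≤ k → ∀ u, S (k - 1) ≤ u → u < S k → dist (f u) (a k) ≤ δ k)
    (hS : StrictMono S) (hSunb : Tendsto S atTop atTop) {x : X} :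
    (∃ s : ℕ → ℝ, Tendsto s atTop atTop ∧ Tendsto (f ∘ s) atTop (𝓝 x)) ↔
      MapClusterPt x atTop a := by
  constructor
  · rintro ⟨s, hs, hfs⟩
    have hk := (tendsto_blockIndex hS.monotone hSunb).comp hs
    have hu := hs.eventually (eventually_mem_Ico_blockIndex hS.monotone hSunb)
    exact ((tendsto_comp_iff_of_mem_Ico hδ hfa hk hu).1 hfs).mapClusterPt.of_comp hk
  · intro h
    obtain ⟨ψ, hψ, hlim⟩ := h.tendsto_subseq
    have hψ_pred := (tendsto_sub_atTop_nat 1).comp hψ.tendsto_atTop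
    have hu : ∀ᶠ n in atTop, S (ψ n - 1) ∈ Ico (S (ψ n - 1)) (S (ψ n)) := by
      filter_upwards [hψ.tendsto_atTop.eventually_gt_atTop 0] with n hn
      exact ⟨le_rfl, hS (Nat.sub_lt hn one_pos)⟩
    exact ⟨_, hSunb.comp hψ_pred,
      (tendsto_comp_iff_of_mem_Ico hδ hfa hψ.tendsto_atTop hu).2 hlim⟩

end Blocks

theorem stmt_15_general (φ : ℝ → (Fin 3 → ℝ)) (γ : ℝ → (Fin 3 → ℝ)) (hcont : Continuous γ)
    (t : ℕ → ℝ) (hdense : Set.range γ ⊆ closure (Set.range fun j => γ (t j)))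
    (ε : ℕ → ℝ)
    (hεlim : Tendsto ε atTop (nhds 0))
    (S : ℕ → ℝ) (hSmono : StrictMono S)
    (hSunb : Tendsto S atTop atTop)
    (happrox : ∀ k : ℕ, 2 ≤ k → ∀ u : ℝ, S (k - 1) ≤ u → u < S k →
      ∑ i, |φ u i - γ (t k) i| ≤ 33 * ε k) :
    {P : Fin 3 → ℝ | ∃ s : ℕ → ℝ, Tendsto s atTop atTop ∧
        Tendsto (fun n => φ (s n)) atTop (nhds P)} = closure (Set.range γ) := by
  have hfa : ∀ k, 2 ≤ k → ∀ u, S (k - 1) ≤ u → u < S k →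
      dist (φ u) (γ (t k)) ≤ 33 * ε k :=
    fun k hk u h₁ h₂ => (dist_le_sum_abs_sub _ _).trans (happrox k hk u h₁ h₂)
  have hδ : Tendsto (fun k => 33 * ε k) atTop (𝓝 0) := by
    simpa using hεlim.const_mul 33
  ext P
  rw [← mapClusterPt_comp_iff_mem_closure_range hcont hdense]
  exact exists_tendsto_comp_iff_mapClusterPt hδ hfa hSmono hSunb

/-- if `φ(t)` is `33 ε k`-close (in ℓ¹) to `γ (t k)` on `[S (k-1), S k)`
for a sequence `(γ (t k))` dense in `γ(ℝ)` and `ε k → 0`, then the accumulation set of `φ`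
as `t → ∞` is exactly the closure of `γ(ℝ)`. -/
theorem stmt_15 (φ : ℝ → (Fin 3 → ℝ)) (γ : ℝ → (Fin 3 → ℝ)) (hcont : Continuous γ)
    (t : ℕ → ℝ) (hdense : Set.range γ ⊆ closure (Set.range fun j => γ (t j)))
    (ε : ℕ → ℝ) (hεpos : ∀ j, 0 < ε j) (hεanti : Antitone ε)
    (hεlim : Tendsto ε atTop (nhds 0))
    (S : ℕ → ℝ) (hS0 : ∀ k, 0 ≤ S k) (hSmono : StrictMono S)
    (hSunb : Tendsto S atTop atTop)
    (hφΔ : ∀ u : ℝ, 0 ≤ u → φ u ∈ stdSimplex ℝ (Fin 3))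
    (hγΔ : ∀ u : ℝ, γ u ∈ stdSimplex ℝ (Fin 3))
    (happrox : ∀ k : ℕ, 2 ≤ k → ∀ u : ℝ, S (k - 1) ≤ u → u < S k →
      ∑ i, |φ u i - γ (t k) i| ≤ 33 * ε k) :
    {P : Fin 3 → ℝ | ∃ s : ℕ → ℝ, Tendsto s atTop atTop ∧
        Tendsto (fun n => φ (s n)) atTop (nhds P)} = closure (Set.range γ) :=
  stmt_15_general φ γ hcont t hdense ε hεlim S hSmono hSunb happrox
end
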